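/- The 2×2×2 tensor over F_2 given in flattened form [0,0,0,1,0,1,1,0] (i.e. x_{111}=0, x_{112}=0, x_{121}=0, x_{122}=1, x_{211}=0, x_{212}=1, x_{221}=1, x_{222}=0) has rank exactly 3. -/
import Mathlib


def outer (n : ℕ) (v : Fin n → Fin 2 → ZMod 2) : (Fin n → Fin 2) → ZMod 2 :=
  fun i => ∏ j, v j (i j)

def hasRankLE (n R : ℕ) (X : (Fin n → Fin 2) → ZMod 2) : Prop :=
  ∃ v : Fin R → Fin n → Fin 2 → ZMod 2, X = fun i => ∑ r, outer n (v r) i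

noncomputable def tensorRank (n : ℕ) (X : (Fin n → Fin 2) → ZMod 2) : ℕ :=
  sInf {R | hasRankLE n R X}

/-- Build a `2×2×2` tensor from its flattening (lexicographic order of subscripts). -/
def flat3 (l : Fin 8 → ZMod 2) : (Fin 3 → Fin 2) → ZMod 2 :=
  fun i => l ⟨4 * (i 0 : ℕ) + 2 * (i 1 : ℕ) + (i 2 : ℕ), by
    have h0 := (i 0).isLt; have h1 := (i 1).isLt; have h2 := (i 2).isLt; omega⟩

section Aux

def myvec : Fin 4 → Fin 2 → ZMod 2 := ![![0,0],![0,1],![1,0],![1,1]]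

lemma fin2cases (i : Fin 2) : i = 0 ∨ i = 1 := by omega

lemma exists_code (f : Fin 2 → ZMod 2) : ∃ k : Fin 4, f = myvec k := by
  have h : ∀ x : ZMod 2, x = 0 ∨ x = 1 := by decide
  rcases h (f 0) with h0 | h0 <;> rcases h (f 1) with h1 | h1
  · exact ⟨0, funext fun i => by rcases fin2cases i with rfl | rfl <;> simp only [h0, h1] <;> decide⟩
  · exact ⟨1, funext fun i => by rcases fin2cases i with rfl | rfl <;> simp only [h0, h1] <;> decide⟩
  · exact ⟨2, funext fun i => by rcases fin2cases i with rfl | rfl <;> simp only [h0, h1] <;> decide⟩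
  · exact ⟨3, funext fun i => by rcases fin2cases i with rfl | rfl <;> simp only [h0, h1] <;> decide⟩

set_option maxRecDepth 100000 in
lemma key2 : ∀ a b c d e f : Fin 4, ¬ ∀ i : Fin 3 → Fin 2,
    flat3 ![0,0,0,1,0,1,1,0] i =
      myvec a (i 0) * myvec b (i 1) * myvec c (i 2) +
      myvec d (i 0) * myvec e (i 1) * myvec f (i 2) := by decide

set_option maxRecDepth 100000 in
lemma key1 : ∀ a b c : Fin 4, ¬ ∀ i : Fin 3 → Fin 2,
    flat3 ![0,0,0,1,0,1,1,0] i =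
      myvec a (i 0) * myvec b (i 1) * myvec c (i 2) := by decide

lemma key0 : ¬ ∀ i : Fin 3 → Fin 2, flat3 ![0,0,0,1,0,1,1,0] i = 0 := by decide

lemma upper : hasRankLE 3 3 (flat3 ![0,0,0,1,0,1,1,0]) := by
  refine ⟨![![![1,0],![0,1],![0,1]], ![![0,1],![1,0],![0,1]], ![![0,1],![0,1],![1,0]]], ?_⟩
  funext i
  simp only [Fin.sum_univ_three, outer, Fin.prod_univ_three]
  revert i; decide

end Aux

theorem rank_three_example :
    tensorRank 3 (flat3 ![0, 0, 0, 1, 0, 1, 1, 0]) = 3 := by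
  unfold tensorRank
  apply le_antisymm
  · exact Nat.sInf_le upper
  · refine le_csInf ⟨3, upper⟩ ?_
    intro m hm
    by_contra hlt
    push_neg at hlt
    obtain ⟨v, hv⟩ := hm
    interval_cases m
    · exact key0 fun i => by simpa using congrFun hv i
    · obtain ⟨a, ha⟩ := exists_code (v 0 0)
      obtain ⟨b, hb⟩ := exists_code (v 0 1)
      obtain ⟨c, hc⟩ := exists_code (v 0 2)
      refine key1 a b c fun i => ?_
      have := congrFun hv i
      simpa [outer, Fin.sum_univ_one, Fin.prod_univ_three, ← ha, ← hb, ← hc] using this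
    · obtain ⟨a, ha⟩ := exists_code (v 0 0)
      obtain ⟨b, hb⟩ := exists_code (v 0 1)
      obtain ⟨c, hc⟩ := exists_code (v 0 2)
      obtain ⟨d, hd⟩ := exists_code (v 1 0)
      obtain ⟨e, he⟩ := exists_code (v 1 1)
      obtain ⟨f, hf⟩ := exists_code (v 1 2)
      refine key2 a b c d e f fun i => ?_
      have := congrFun hv i
      simpa [outer, Fin.sum_univ_two, Fin.prod_univ_three, ← ha, ← hb, ← hc, ← hd, ← he, ← hf]
        using this
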